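/- For every constant c > 0, there do not exist SOS polynomials σ_0, σ_1, σ_2, σ_3 ∈ ℝ[x_1, x_2] satisfying the polynomial identity σ_3 · ((1 − x_1²) x_2 + 1) = c + σ_0 + σ_1 (1 − x_1²) + σ_2 x_2. -/
import Mathlib


open MvPolynomial

/-- A polynomial in `ℝ[x_1, x_2]` is SOS if it is a finite sum of squares of
polynomials in `ℝ[x_1, x_2]`. -/
def IsSOS (p : MvPolynomial (Fin 2) ℝ) : Prop :=
  ∃ (m : ℕ) (q : Fin m → MvPolynomial (Fin 2) ℝ), p = ∑ i, (q i) ^ 2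

namespace Stmt11Aux

open Polynomial

abbrev P1 : Type := Polynomial ℝ
abbrev P2 : Type := Polynomial P1

/-- sums of squares in a commutative ring -/
def SOS {A : Type*} [CommRing A] (p : A) : Prop :=
  ∃ (m : ℕ) (q : Fin m → A), p = ∑ i, q i ^ 2

lemma SOS.map {F A B : Type*} [CommRing A] [CommRing B] [FunLike F A B]
    [RingHomClass F A B] (f : F) {p : A} (h : SOS p) : SOS (f p) := by
  obtain ⟨m, q, rfl⟩ := h
  exact ⟨m, fun i => f (q i), by simp [map_sum]⟩

lemma SOS.nonneg {x : ℝ} (h : SOS x) : 0 ≤ x := by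
  obtain ⟨m, q, rfl⟩ := h
  exact Finset.sum_nonneg fun i _ => sq_nonneg _

lemma SOS.add {A : Type*} [CommRing A] {p r : A} (hp : SOS p) (hr : SOS r) :
    SOS (p + r) := by
  obtain ⟨m, q, rfl⟩ := hp
  obtain ⟨n, s, rfl⟩ := hr
  refine ⟨m + n, Fin.append q s, ?_⟩
  rw [Fin.sum_univ_add]
  simp

lemma SOS.sq {A : Type*} [CommRing A] (x : A) : SOS (x ^ 2) :=
  ⟨1, fun _ => x, by simp⟩

/-- A nonzero univariate real polynomial which is nonnegative everywhere has
even degree and positive leading coefficient. -/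
lemma even_natDegree_pos_leadingCoeff {p : Polynomial ℝ} (hp : p ≠ 0)
    (h : ∀ t : ℝ, 0 ≤ p.eval t) : Even p.natDegree ∧ 0 < p.leadingCoeff := by
  have key : ∀ q : Polynomial ℝ, q ≠ 0 → (∀ t : ℝ, 0 ≤ q.eval t) → 0 < q.leadingCoeff := by
    intro q hq hqt
    rcases lt_trichotomy q.leadingCoeff 0 with hlt | heq | hgt
    · by_cases hd : 0 < q.degree
      · have ht := Polynomial.tendsto_atBot_of_leadingCoeff_nonpos q hd hlt.le
        obtain ⟨t, ht⟩ := (ht.eventually (Filter.eventually_lt_atBot 0)).exists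
        exact absurd (hqt t) (not_le.2 ht)
      · have hd0 : q.natDegree = 0 := by
          rcases Polynomial.natDegree_eq_zero_iff_degree_le_zero.2 (not_lt.1 hd) with h0
          exact h0
        have : q.leadingCoeff = q.eval 0 := by
          rw [Polynomial.leadingCoeff, hd0, ← Polynomial.coeff_zero_eq_eval_zero]
        exact absurd (hqt 0) (not_le.2 (by rw [← this]; exact hlt))
    · exact absurd heq (Polynomial.leadingCoeff_ne_zero.2 hq)
    · exact hgt
  have hlead : 0 < p.leadingCoeff := key p hp h
  refine ⟨?_, hlead⟩
  by_contra hodd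
  have hodd' : Odd p.natDegree := Nat.not_even_iff_odd.1 hodd
  set q : Polynomial ℝ := p.comp (-Polynomial.X) with hqdef
  have hXne : (-Polynomial.X : Polynomial ℝ).natDegree ≠ 0 := by
    rw [Polynomial.natDegree_neg, Polynomial.natDegree_X]; exact one_ne_zero
  have hqlead : q.leadingCoeff = -p.leadingCoeff := by
    rw [hqdef, Polynomial.leadingCoeff_comp hXne, Polynomial.leadingCoeff_neg,
      Polynomial.leadingCoeff_X, hodd'.neg_one_pow]
    ring
  have hqne : q ≠ 0 := by
    intro h0
    rw [h0, Polynomial.leadingCoeff_zero] at hqlead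
    have : p.leadingCoeff = 0 := by linarith [hqlead]
    linarith
  have hqt : ∀ t : ℝ, 0 ≤ q.eval t := by
    intro t
    rw [hqdef, Polynomial.eval_comp]
    exact h _
  have := key q hqne hqt
  rw [hqlead] at this
  linarith

/-- full evaluation of an element of `P2` at a point `(a, t)` -/
noncomputable def ee (a t : ℝ) : P2 →+* ℝ :=
  (Polynomial.evalRingHom t).comp (Polynomial.mapRingHom (Polynomial.evalRingHom a))

@[simp] lemma ee_C (a t : ℝ) (p : P1) : ee a t (Polynomial.C p) = p.eval a := by
  simp [ee]

@[simp] lemma ee_X (a t : ℝ) : ee a t Polynomial.X = t := by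
  simp [ee]

lemma ee_nonneg {S : P2} (h : SOS S) (a t : ℝ) : 0 ≤ ee a t S :=
  (h.map (ee a t)).nonneg

lemma lead_key {S : P2} (hS : SOS S) {a : ℝ} (ha : S.leadingCoeff.eval a ≠ 0) :
    Even S.natDegree ∧ 0 < S.leadingCoeff.eval a := by
  set f : P1 →+* ℝ := Polynomial.evalRingHom a with hf
  set A : Polynomial ℝ := S.map f with hA
  have hfa : f S.leadingCoeff ≠ 0 := ha
  have hcoeff : A.leadingCoeff = S.leadingCoeff.eval a :=
    Polynomial.leadingCoeff_map_of_leadingCoeff_ne_zero f hfa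
  have hdeg : A.natDegree = S.natDegree :=
    Polynomial.natDegree_map_of_leadingCoeff_ne_zero f hfa
  have hA0 : A ≠ 0 := by
    intro h0
    rw [h0, Polynomial.leadingCoeff_zero] at hcoeff
    exact ha hcoeff.symm
  have hnn : ∀ t : ℝ, 0 ≤ A.eval t := by
    intro t
    have : A.eval t = ee a t S := by
      simp [ee, hA, hf]
    rw [this]
    exact ee_nonneg hS a t
  obtain ⟨he, hl⟩ := even_natDegree_pos_leadingCoeff hA0 hnn
  exact ⟨hdeg ▸ he, hcoeff ▸ hl⟩

lemma SOS.even_natDegree {S : P2} (hS : SOS S) (h0 : S ≠ 0) : Even S.natDegree := by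
  have hlc : S.leadingCoeff ≠ 0 := Polynomial.leadingCoeff_ne_zero.2 h0
  obtain ⟨a, ha⟩ := (Polynomial.finite_setOf_isRoot hlc).infinite_compl.nonempty
  exact (lead_key hS (fun h => ha h)).1

lemma SOS.lead_nonneg {S : P2} (hS : SOS S) (a : ℝ) : 0 ≤ S.leadingCoeff.eval a := by
  by_cases ha : S.leadingCoeff.eval a = 0
  · rw [ha]
  · exact (lead_key hS ha).2.le


set_option maxHeartbeats 1000000 in
theorem main (c : ℝ) (hc : 0 < c) (σ0 σ1 σ2 σ3 : MvPolynomial (Fin 2) ℝ)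
    (hs0 : IsSOS σ0) (hs1 : IsSOS σ1) (hs2 : IsSOS σ2) (hs3 : IsSOS σ3)
    (heq : σ3 * ((1 - MvPolynomial.X 0 ^ 2) * MvPolynomial.X 1 + 1) =
      MvPolynomial.C c + σ0 + σ1 * (1 - MvPolynomial.X 0 ^ 2) + σ2 * MvPolynomial.X 1) :
    False := by
  classical
  set Φ : MvPolynomial (Fin 2) ℝ →ₐ[ℝ] P2 :=
    MvPolynomial.aeval ![Polynomial.C Polynomial.X, Polynomial.X] with hΦ
  set S0 := Φ σ0 with hS0def
  set S1 := Φ σ1 with hS1def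
  set S2 := Φ σ2 with hS2def
  set S3 := Φ σ3 with hS3def
  have sosS : ∀ σ : MvPolynomial (Fin 2) ℝ, IsSOS σ → SOS (Φ σ) := by
    rintro σ ⟨m, q, rfl⟩
    rw [map_sum]
    exact ⟨m, fun i => Φ (q i), by simp⟩
  have hsos0 : SOS S0 := sosS σ0 hs0
  have hsos1 : SOS S1 := sosS σ1 hs1
  have hsos2 : SOS S2 := sosS σ2 hs2
  have hsos3 : SOS S3 := sosS σ3 hs3
  set w : P1 := 1 - Polynomial.X ^ 2 with hwdef
  have hwne : w ≠ 0 := by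
    intro h
    have h2 := congrArg (Polynomial.eval 0) h
    simp [hwdef] at h2
  have hΦw : Φ (1 - MvPolynomial.X 0 ^ 2) = Polynomial.C w := by
    simp [hΦ, hwdef]
  have hΦX1 : Φ (MvPolynomial.X 1) = Polynomial.X := by
    simp [hΦ]
  have hΦC : Φ (MvPolynomial.C c) = Polynomial.C (Polynomial.C c) := by
    simp [hΦ, MvPolynomial.aeval_C, Polynomial.algebraMap_apply, Polynomial.algebraMap_eq]
  set T0 : P2 := Polynomial.C (Polynomial.C c) + S0 with hT0def
  set lin : P2 := Polynomial.C w * Polynomial.X + 1 with hlindef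
  have hEQ : S3 * lin = T0 + Polynomial.C w * S1 + S2 * Polynomial.X := by
    have him := congrArg Φ heq
    simp only [map_mul, map_add, map_one, hΦw, hΦX1, hΦC, ← hS0def, ← hS1def, ← hS2def,
      ← hS3def] at him
    rw [hlindef, hT0def]
    linear_combination him
  have hlinlead : lin.leadingCoeff = w := by
    rw [hlindef, show (1 : P2) = Polynomial.C 1 from Polynomial.C_1.symm]
    exact Polynomial.leadingCoeff_linear hwne
  have hlinne : lin ≠ 0 := by
    intro h
    exact hwne (by rw [← hlinlead, h, Polynomial.leadingCoeff_zero])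
  have hlindeg : lin.natDegree = 1 := by
    rw [hlindef, show (1 : P2) = Polynomial.C 1 from Polynomial.C_1.symm]
    exact Polynomial.natDegree_linear hwne
  have hS3ne : S3 ≠ 0 := by
    intro h
    have h2 := congrArg (ee 0 0) hEQ
    rw [h, zero_mul] at h2
    simp only [map_add, map_mul, hT0def, hlindef, ee_C, ee_X, mul_zero, add_zero] at h2
    have e0 := ee_nonneg hsos0 0 0
    have e1 := ee_nonneg hsos1 0 0
    simp [hwdef] at h2
    nlinarith [h2, e0, e1]
  have hT0sos : SOS T0 := by
    have hcsq : Polynomial.C (Polynomial.C c) = (Polynomial.C (Polynomial.C (Real.sqrt c))) ^ 2 := by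
      rw [← map_pow, ← map_pow, Real.sq_sqrt hc.le]
    rw [hT0def, hcsq]
    exact (SOS.sq _).add hsos0
  have hT0ne : T0 ≠ 0 := by
    intro h
    have h2 := congrArg (ee 0 0) h
    simp only [hT0def, map_add, ee_C, map_zero] at h2
    have e0 := ee_nonneg hsos0 0 0
    simp at h2
    nlinarith [h2, e0]
  have hd3even : Even S3.natDegree := hsos3.even_natDegree hS3ne
  have hT0even : Even T0.natDegree := hT0sos.even_natDegree hT0ne
  set d3 := S3.natDegree with hd3def
  have hK : (T0 + Polynomial.C w * S1 + S2 * Polynomial.X).natDegree = d3 + 1 := by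
    rw [← hEQ, Polynomial.natDegree_mul hS3ne hlinne, hlindeg]
  have hcoeffR : ∀ k : ℕ, (T0 + Polynomial.C w * S1 + S2 * Polynomial.X).coeff (k + 1)
      = T0.coeff (k + 1) + w * S1.coeff (k + 1) + S2.coeff k := by
    intro k
    simp [Polynomial.coeff_add, Polynomial.coeff_C_mul, Polynomial.coeff_mul_X]
  have hbound : max (max T0.natDegree (Polynomial.C w * S1).natDegree)
      ((S2 * Polynomial.X).natDegree) ≤ d3 + 1 := by
    by_contra hcon
    push_neg at hcon
    set N := max (max T0.natDegree (Polynomial.C w * S1).natDegree)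
      ((S2 * Polynomial.X).natDegree) with hNdef
    have hRN : (T0 + Polynomial.C w * S1 + S2 * Polynomial.X).coeff N = 0 := by
      apply Polynomial.coeff_eq_zero_of_natDegree_lt
      rw [hK]; exact hcon
    obtain ⟨k, hk⟩ : ∃ k, N = k + 1 := ⟨N - 1, by omega⟩
    rw [hk, hcoeffR k] at hRN
    have hbT0 : T0.natDegree ≤ k + 1 := by
      rw [← hk]; exact le_trans (le_max_left _ _) (le_max_left _ _)
    have hb1 : (Polynomial.C w * S1).natDegree ≤ k + 1 := by
      rw [← hk]; exact le_trans (le_max_right _ _) (le_max_left _ _)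
    have hb2 : (S2 * Polynomial.X).natDegree ≤ k + 1 := by
      rw [← hk]; exact le_max_right _ _
    rcases Nat.even_or_odd (k + 1) with hevN | hoddN
    · -- N even case
      have hkodd : ¬ Even k := Nat.even_add_one.1 hevN
      have hS2k : S2.coeff k = 0 := by
        by_cases hS2z : S2 = 0
        · simp [hS2z]
        · have hn2 : (S2 * Polynomial.X).natDegree = S2.natDegree + 1 := by
            rw [Polynomial.natDegree_mul hS2z Polynomial.X_ne_zero, Polynomial.natDegree_X]
          have hd2even : Even S2.natDegree := hsos2.even_natDegree hS2z
          apply Polynomial.coeff_eq_zero_of_natDegree_lt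
          have h1 : S2.natDegree + 1 ≤ k + 1 := by rw [← hn2]; exact hb2
          have h2 : S2.natDegree ≠ k := fun he => hkodd (he ▸ hd2even)
          omega
      rw [hS2k, add_zero] at hRN
      set α := T0.coeff (k + 1) with hαdef
      set β := S1.coeff (k + 1) with hβdef
      have hα : ∀ a : ℝ, 0 ≤ α.eval a := by
        rcases lt_or_eq_of_le hbT0 with hlt | heq'
        · intro a; rw [hαdef, Polynomial.coeff_eq_zero_of_natDegree_lt hlt]; simp
        · have hh : α = T0.leadingCoeff := by rw [hαdef, Polynomial.leadingCoeff, heq']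
          intro a; rw [hh]; exact hT0sos.lead_nonneg a
      have hβ : ∀ a : ℝ, 0 ≤ β.eval a := by
        by_cases hS1z : S1 = 0
        · intro a; rw [hβdef, hS1z]; simp
        · have hn1 : (Polynomial.C w * S1).natDegree = S1.natDegree :=
            Polynomial.natDegree_C_mul hwne
          rcases lt_or_eq_of_le (hn1 ▸ hb1 : S1.natDegree ≤ k + 1) with hlt | heq'
          · intro a; rw [hβdef, Polynomial.coeff_eq_zero_of_natDegree_lt hlt]; simp
          · have hh : β = S1.leadingCoeff := by rw [hβdef, Polynomial.leadingCoeff, heq']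
            intro a; rw [hh]; exact hsos1.lead_nonneg a
      have hattain : α ≠ 0 ∨ β ≠ 0 := by
        rcases max_choice (max T0.natDegree (Polynomial.C w * S1).natDegree)
          ((S2 * Polynomial.X).natDegree) with hm | hm
        · rw [← hNdef, hk] at hm
          rcases max_choice T0.natDegree (Polynomial.C w * S1).natDegree with hm2 | hm2
          · left
            have hT0d : T0.natDegree = k + 1 := by rw [← hm2, ← hm]
            have hh : α = T0.leadingCoeff := by rw [hαdef, Polynomial.leadingCoeff, hT0d]
            rw [hh]
            exact Polynomial.leadingCoeff_ne_zero.2 hT0ne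
          · right
            have hn1d : (Polynomial.C w * S1).natDegree = k + 1 := by rw [← hm2, ← hm]
            have hS1z : S1 ≠ 0 := by
              intro h
              rw [h, mul_zero, Polynomial.natDegree_zero] at hn1d
              omega
            have hn1 : (Polynomial.C w * S1).natDegree = S1.natDegree :=
              Polynomial.natDegree_C_mul hwne
            have hh : β = S1.leadingCoeff := by
              rw [hβdef, Polynomial.leadingCoeff, ← hn1, hn1d]
            rw [hh]
            exact Polynomial.leadingCoeff_ne_zero.2 hS1z
        · exfalso
          rw [← hNdef, hk] at hm
          by_cases hS2z : S2 = 0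
          · rw [hS2z, zero_mul, Polynomial.natDegree_zero] at hm
            omega
          · have hn2 : (S2 * Polynomial.X).natDegree = S2.natDegree + 1 := by
              rw [Polynomial.natDegree_mul hS2z Polynomial.X_ne_zero, Polynomial.natDegree_X]
            have hd2even : Even S2.natDegree := hsos2.even_natDegree hS2z
            rw [hn2] at hm
            have : S2.natDegree = k := by omega
            exact hkodd (this ▸ hd2even)
      have hroot : ∀ a ∈ Set.Ioo (-1 : ℝ) 1, α.IsRoot a ∧ β.IsRoot a := by
        intro a ha
        have h2 := congrArg (Polynomial.eval a) hRN
        rw [Polynomial.eval_add, Polynomial.eval_mul, Polynomial.eval_zero] at h2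
        have hw' : Polynomial.eval a w = 1 - a ^ 2 := by simp [hwdef]
        rw [hw'] at h2
        have hwpos : 0 < 1 - a ^ 2 := by nlinarith [ha.1, ha.2]
        have hα' := hα a
        have hβ' := hβ a
        constructor
        · show α.eval a = 0; nlinarith
        · show β.eval a = 0; nlinarith
      have hαz : α = 0 := by
        apply Polynomial.eq_zero_of_infinite_isRoot α
        exact (Set.Ioo_infinite (by norm_num : (-1 : ℝ) < 1)).mono fun a ha => (hroot a ha).1
      have hβz : β = 0 := by
        apply Polynomial.eq_zero_of_infinite_isRoot β
        exact (Set.Ioo_infinite (by norm_num : (-1 : ℝ) < 1)).mono fun a ha => (hroot a ha).2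
      rcases hattain with h | h
      · exact h hαz
      · exact h hβz
    · -- N odd case
      have hT0k : T0.coeff (k + 1) = 0 := by
        apply Polynomial.coeff_eq_zero_of_natDegree_lt
        have hne : T0.natDegree ≠ k + 1 := fun h =>
          (Nat.not_even_iff_odd.2 hoddN) (h ▸ hT0even)
        omega
      have hS1k : S1.coeff (k + 1) = 0 := by
        by_cases hS1z : S1 = 0
        · simp [hS1z]
        · apply Polynomial.coeff_eq_zero_of_natDegree_lt
          have hn1 : (Polynomial.C w * S1).natDegree = S1.natDegree :=
            Polynomial.natDegree_C_mul hwne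
          have hle : S1.natDegree ≤ k + 1 := hn1 ▸ hb1
          have heven := hsos1.even_natDegree hS1z
          have hne : S1.natDegree ≠ k + 1 := fun h =>
            (Nat.not_even_iff_odd.2 hoddN) (h ▸ heven)
          omega
      rw [hT0k, hS1k, mul_zero, zero_add, zero_add] at hRN
      have hm : (S2 * Polynomial.X).natDegree = k + 1 := by
        rcases max_choice (max T0.natDegree (Polynomial.C w * S1).natDegree)
          ((S2 * Polynomial.X).natDegree) with hm | hm
        · exfalso
          rw [← hNdef, hk] at hm
          rcases max_choice T0.natDegree (Polynomial.C w * S1).natDegree with hm2 | hm2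
          · have hT0d : T0.natDegree = k + 1 := by rw [← hm2, ← hm]
            exact (Nat.not_even_iff_odd.2 hoddN) (hT0d ▸ hT0even)
          · have hn1d : (Polynomial.C w * S1).natDegree = k + 1 := by rw [← hm2, ← hm]
            by_cases hS1z : S1 = 0
            · rw [hS1z, mul_zero, Polynomial.natDegree_zero] at hn1d
              omega
            · have hn1 : (Polynomial.C w * S1).natDegree = S1.natDegree :=
                Polynomial.natDegree_C_mul hwne
              have heven := hsos1.even_natDegree hS1z
              rw [hn1] at hn1d
              exact (Nat.not_even_iff_odd.2 hoddN) (hn1d ▸ heven)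
        · rw [← hNdef, hk] at hm
          exact hm.symm
      have hS2z : S2 ≠ 0 := by
        intro h
        rw [h, zero_mul, Polynomial.natDegree_zero] at hm
        omega
      have hd2k : S2.natDegree = k := by
        have h2 := Polynomial.natDegree_mul hS2z (Polynomial.X_ne_zero (R := P1))
        rw [Polynomial.natDegree_X] at h2
        omega
      have hlead2 : S2.coeff k = S2.leadingCoeff := by
        rw [← hd2k, Polynomial.coeff_natDegree]
      exact Polynomial.leadingCoeff_ne_zero.2 hS2z (by rw [← hlead2, hRN])
  have hbT0' : T0.natDegree ≤ d3 + 1 :=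
    le_trans (le_trans (le_max_left _ _) (le_max_left _ _)) hbound
  have hb1' : (Polynomial.C w * S1).natDegree ≤ d3 + 1 :=
    le_trans (le_trans (le_max_right _ _) (le_max_left _ _)) hbound
  have hb2' : (S2 * Polynomial.X).natDegree ≤ d3 + 1 :=
    le_trans (le_max_right _ _) hbound
  have hoddK : ¬ Even (d3 + 1) := by
    rw [Nat.even_add_one]
    exact fun h => h hd3even
  have hLHS : (S3 * lin).coeff (d3 + 1) = S3.leadingCoeff * w := by
    have h1 : (S3 * lin).natDegree = d3 + 1 := by
      rw [Polynomial.natDegree_mul hS3ne hlinne, hlindeg]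
    rw [← h1, Polynomial.coeff_natDegree, Polynomial.leadingCoeff_mul, hlinlead]
  have hT0K : T0.coeff (d3 + 1) = 0 := by
    apply Polynomial.coeff_eq_zero_of_natDegree_lt
    have hne : T0.natDegree ≠ d3 + 1 := fun h => hoddK (h ▸ hT0even)
    omega
  have hS1K : S1.coeff (d3 + 1) = 0 := by
    by_cases hS1z : S1 = 0
    · simp [hS1z]
    · apply Polynomial.coeff_eq_zero_of_natDegree_lt
      have hn1 : (Polynomial.C w * S1).natDegree = S1.natDegree :=
        Polynomial.natDegree_C_mul hwne
      have hle : S1.natDegree ≤ d3 + 1 := hn1 ▸ hb1'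
      have heven := hsos1.even_natDegree hS1z
      have hne : S1.natDegree ≠ d3 + 1 := fun h => hoddK (h ▸ heven)
      omega
  have hmain : S3.leadingCoeff * w = S2.coeff d3 := by
    have h2 := hcoeffR d3
    rw [← hEQ, hLHS, hT0K, hS1K, mul_zero, zero_add, zero_add] at h2
    exact h2
  have hS3lc : S3.leadingCoeff ≠ 0 := Polynomial.leadingCoeff_ne_zero.2 hS3ne
  have hS2z : S2 ≠ 0 := by
    intro h
    rw [h, Polynomial.coeff_zero] at hmain
    exact (mul_ne_zero hS3lc hwne) hmain
  have hd2 : S2.natDegree = d3 := by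
    have hn2 : (S2 * Polynomial.X).natDegree = S2.natDegree + 1 := by
      rw [Polynomial.natDegree_mul hS2z Polynomial.X_ne_zero, Polynomial.natDegree_X]
    have hle : S2.natDegree ≤ d3 := by omega
    rcases lt_or_eq_of_le hle with hlt | heq'
    · exfalso
      rw [Polynomial.coeff_eq_zero_of_natDegree_lt hlt] at hmain
      exact (mul_ne_zero hS3lc hwne) hmain
    · exact heq'
  have hlead2 : S2.leadingCoeff = S3.leadingCoeff * w := by
    rw [← Polynomial.coeff_natDegree, hd2, ← hmain]
  obtain ⟨a, ha⟩ := ((Set.Ioi_infinite (1 : ℝ)).diff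
    (Polynomial.finite_setOf_isRoot hS3lc)).nonempty
  have haI : (1 : ℝ) < a := ha.1
  have haR : S3.leadingCoeff.eval a ≠ 0 := ha.2
  have h3pos : 0 < S3.leadingCoeff.eval a := (lead_key hsos3 haR).2
  have h2nn : 0 ≤ S2.leadingCoeff.eval a := hsos2.lead_nonneg a
  have hcalc := congrArg (Polynomial.eval a) hlead2
  rw [Polynomial.eval_mul] at hcalc
  have hwa : Polynomial.eval a w = 1 - a ^ 2 := by simp [hwdef]
  rw [hwa] at hcalc
  have hneg : (1 : ℝ) - a ^ 2 < 0 := by nlinarith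
  nlinarith [mul_neg_of_pos_of_neg h3pos hneg]




end Stmt11Aux

/-- For every constant `c > 0` there are no SOS polynomials
`σ_0, σ_1, σ_2, σ_3 ∈ ℝ[x_1, x_2]` with
`σ_3 ((1 − x_1²) x_2 + 1) = c + σ_0 + σ_1 (1 − x_1²) + σ_2 x_2`. -/
theorem stmt11 (c : ℝ) (hc : 0 < c) :
    ¬ ∃ σ0 σ1 σ2 σ3 : MvPolynomial (Fin 2) ℝ,
      IsSOS σ0 ∧ IsSOS σ1 ∧ IsSOS σ2 ∧ IsSOS σ3 ∧
      σ3 * ((1 - X 0 ^ 2) * X 1 + 1) =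
        C c + σ0 + σ1 * (1 - X 0 ^ 2) + σ2 * X 1 := by
  rintro ⟨σ0, σ1, σ2, σ3, h0, h1, h2, h3, heq⟩
  exact Stmt11Aux.main c hc σ0 σ1 σ2 σ3 h0 h1 h2 h3 heq
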